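/- Let (W,+) be a semigroup. Then A_s(W) = A_fin(W), i.e., the set of stepwise quasi-absorbing elements equals A_fin(W). -/

import Mathlib

open Pointwise

/-- Principal left ideal W_L(u) = (W + {u}) ∪ {u}. -/
def WLset {W : Type*} [AddSemigroup W] (u : W) : Set W :=
  ((Set.univ : Set W) + ({u} : Set W)) ∪ {u}

/-- Principal right ideal W_R(u) = ({u} + W) ∪ {u}. -/
def WRset {W : Type*} [AddSemigroup W] (u : W) : Set W :=
  (({u} : Set W) + (Set.univ : Set W)) ∪ {u}

/-- Principal two-sided ideal W(u) = (W_L(u) + W) ∪ W_L(u). -/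
def WIset {W : Type*} [AddSemigroup W] (u : W) : Set W :=
  (WLset u + (Set.univ : Set W)) ∪ WLset u

/-- Green L-class. -/
def Lclass {W : Type*} [AddSemigroup W] (u : W) : Set W := {v | WLset u = WLset v}

/-- Green R-class. -/
def Rclass {W : Type*} [AddSemigroup W] (u : W) : Set W := {v | WRset u = WRset v}

/-- Green H-class. -/
def Hclass {W : Type*} [AddSemigroup W] (u : W) : Set W :=
  {v | WLset u = WLset v ∧ WRset u = WRset v}

def IsLeftIdealSG {W : Type*} [AddSemigroup W] (A : Set W) : Prop :=
  (Set.univ : Set W) + A ⊆ A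

def IsRightIdealSG {W : Type*} [AddSemigroup W] (A : Set W) : Prop :=
  A + (Set.univ : Set W) ⊆ A

def IsIdealSG {W : Type*} [AddSemigroup W] (A : Set W) : Prop :=
  IsLeftIdealSG A ∧ IsRightIdealSG A

/-- The set E(W) of idempotents. -/
def Eset (W : Type*) [AddSemigroup W] : Set W := {e | e + e = e}

/-- The Rees order: f ≤_H e iff e + f = f + e = f. -/
def ReesLE {W : Type*} [AddSemigroup W] (f e : W) : Prop := e + f = f ∧ f + e = f

/-- E^≤(e) = {f ∈ E(W) | f ≤_H e}. -/
def Ele {W : Type*} [AddSemigroup W] (e : W) : Set W := {f ∈ Eset W | ReesLE f e}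

/-- E^lin(W): idempotents α such that ≤_H is a total order on E^≤(α). -/
def Elin (W : Type*) [AddSemigroup W] : Set W :=
  {α ∈ Eset W | ∀ f ∈ Ele α, ∀ g ∈ Ele α, ReesLE f g ∨ ReesLE g f}

def Afin (W : Type*) [AddSemigroup W] : Set W :=
  {α ∈ Elin W | (Ele α).Finite ∧ ∀ w ∉ Ele α, w + α = α ∧ α + w = α}

/-- The set A(W) of quasi-absorbing elements. -/
def AW (W : Type*) [AddSemigroup W] : Set W :=
  {α ∈ Elin W | ∀ w ∉ Ele α, w + α = α ∧ α + w = α}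

/-- Ā_n = ⋃_{i=1}^n A_i. -/
def Abar (W : Type*) [AddSemigroup W] : ℕ → Set W
  | 0 => ∅
  | n + 1 => Abar W n ∪ {α | α ∉ Abar W n ∧ ∀ w ∉ Abar W n, w + α = α ∧ α + w = α}

/-- The sets A_n from the stepwise construction. -/
def Astep (W : Type*) [AddSemigroup W] : ℕ → Set W
  | 0 => ∅
  | n + 1 => {α | α ∉ Abar W n ∧ ∀ w ∉ Abar W n, w + α = α ∧ α + w = α}

/-- The set A_s(W) of stepwise quasi-absorbing elements. -/
def As (W : Type*) [AddSemigroup W] : Set W := {α | ∃ n, α ∈ Astep W n}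

/-- The set P(A) of A-primitive idempotents. -/
def Pset {W : Type*} [AddSemigroup W] (A : Set W) : Set W :=
  {e | e ∈ Eset W \ A ∧ ∀ f ∈ Eset W, ReesLE f e → f = e ∨ f ∈ A}

/-- G ⊆ W is a group under +: closed, with a two-sided identity and inverses. -/
def IsGroupOn {W : Type*} [AddSemigroup W] (G : Set W) : Prop :=
  (∀ a ∈ G, ∀ b ∈ G, a + b ∈ G) ∧
  ∃ e ∈ G, (∀ a ∈ G, a + e = a ∧ e + a = a) ∧
    ∀ a ∈ G, ∃ b ∈ G, a + b = e ∧ b + a = e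

/-- D is an A-minimal ideal. -/
def IsMinimalIdealRel {W : Type*} [AddSemigroup W] (A D : Set W) : Prop :=
  IsIdealSG D ∧ ¬ D ⊆ A ∧ ∀ E : Set W, IsIdealSG E → E ⊂ D → E ⊆ A

/-- D is an ideal of the subsemigroup (V,+). -/
def IsIdealIn {W : Type*} [AddSemigroup W] (V D : Set W) : Prop :=
  D ⊆ V ∧ V + D ⊆ D ∧ D + V ⊆ D

/-- The subsemigroup (V,+) is A-simple. -/
def IsSimpleRel {W : Type*} [AddSemigroup W] (V A : Set W) : Prop :=
  A ⊂ V ∧ ∀ D : Set W, IsIdealIn V D → D = V ∨ D ⊆ A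

/-- A bottleneck ideal. -/
def IsBottleneck {W : Type*} [AddSemigroup W] (A : Set W) : Prop :=
  IsIdealSG A ∧ ∀ D : Set W, IsIdealSG D → D ⊆ A ∨ A ⊆ D


/-!
The sets `A_{n+1}` have at most one element each, and an element of `A_i` lies `≤_H` below every
element of `A_j` for `i ≤ j`; hence an element `α ∈ A_{n+1}` has `E^≤(α) = Ā_n ∪ {α}`, a finite
chain, and `α ∈ A_fin(W)`.

Conversely, for `α ∈ A_fin(W)` peel the finite chain `E^≤(α)` off from the bottom: as long as
`α ∉ Ā_n`, the least element of `E^≤(α) \ Ā_n` lies in `A_{n+1}`, because `α` absorbs everything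
outside `E^≤(α)` and so does every idempotent below `α`. Thus `Ā_n` grows by one element of
`E^≤(α)` per step and must reach `α` after `|E^≤(α)|` steps.
-/

section ReesOrder

variable {W : Type*} [AddSemigroup W]

theorem ReesLE.trans {f g h : W} (hfg : ReesLE f g) (hgh : ReesLE g h) : ReesLE f h :=
  ⟨by rw [← hfg.1, ← add_assoc, hgh.1], by rw [← hfg.2, add_assoc, hgh.2]⟩

theorem ReesLE.absorbs {m α w : W} (hm : ReesLE m α) (hw : w + α = α ∧ α + w = α) :
    w + m = m ∧ m + w = m :=
  ⟨by rw [← hm.1, ← add_assoc, hw.1], by rw [← hm.2, add_assoc, hw.2]⟩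

theorem mem_ele_self {e : W} (he : e ∈ Eset W) : e ∈ Ele e := ⟨he, he, he⟩

theorem ele_subset_ele {f e : W} (h : ReesLE f e) : Ele f ⊆ Ele e :=
  fun _ hg => ⟨hg.1, hg.2.trans h⟩

theorem reesLE_of_ncard_ele_le {α f g : W} (hα : α ∈ Elin W) (hfin : (Ele α).Finite)
    (hf : f ∈ Ele α) (hg : g ∈ Ele α) (hcard : (Ele f).ncard ≤ (Ele g).ncard) : ReesLE f g := by
  rcases hα.2 f hf g hg with hfg | hgf
  · exact hfg
  · have hsub := ele_subset_ele hgf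
    have heq : Ele g = Ele f :=
      Set.eq_of_subset_of_ncard_le hsub hcard (hfin.subset (ele_subset_ele hf.2))
    have hfg : f ∈ Ele g := heq ▸ mem_ele_self hf.1
    exact hfg.2

theorem exists_least_of_subset_ele {α : W} (hα : α ∈ Elin W) (hfin : (Ele α).Finite)
    {S : Set W} (hS : S ⊆ Ele α) (hne : S.Nonempty) : ∃ m ∈ S, ∀ w ∈ S, ReesLE m w := by
  obtain ⟨m, hm, hmin⟩ := Set.exists_min_image S (fun f => (Ele f).ncard) (hfin.subset hS) hne
  exact ⟨m, hm, fun w hw => reesLE_of_ncard_ele_le hα hfin (hS hm) (hS hw) (hmin w hw)⟩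

end ReesOrder

section Stepwise

variable {W : Type*} [AddSemigroup W]

theorem abar_succ (n : ℕ) : Abar W (n + 1) = Abar W n ∪ Astep W (n + 1) := rfl

theorem abar_mono : Monotone (Abar W) :=
  monotone_nat_of_le_succ fun _ => Set.subset_union_left

theorem abar_eq_biUnion (n : ℕ) : Abar W n = ⋃ i < n, Astep W (i + 1) := by
  induction n with
  | zero => simp [Abar]
  | succ n ih => rw [abar_succ, ih, Set.biUnion_lt_succ]

theorem astep_subsingleton (n : ℕ) : (Astep W n).Subsingleton := by
  intro a ha b hb
  cases n with
  | zero => exact ha.elim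
  | succ n => exact (ha.2 b hb.1).2.symm.trans (hb.2 a ha.1).1

theorem abar_finite (n : ℕ) : (Abar W n).Finite := by
  rw [abar_eq_biUnion]
  exact (Set.finite_lt_nat n).biUnion fun _ _ => (astep_subsingleton _).finite

theorem mem_as_of_mem_abar {n : ℕ} {α : W} (h : α ∈ Abar W n) : α ∈ As W := by
  rw [abar_eq_biUnion, Set.mem_iUnion₂] at h
  obtain ⟨i, -, hi⟩ := h
  exact ⟨i + 1, hi⟩

theorem mem_eset_of_mem_astep {n : ℕ} {α : W} (hα : α ∈ Astep W (n + 1)) : α ∈ Eset W :=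
  (hα.2 α hα.1).1

theorem reesLE_of_mem_astep {i j : ℕ} {f g : W} (hij : i ≤ j)
    (hf : f ∈ Astep W (i + 1)) (hg : g ∈ Astep W (j + 1)) : ReesLE f g :=
  hf.2 g fun h => hg.1 (abar_mono hij h)

theorem reesLE_total_of_mem_abar {n : ℕ} {f g : W} (hf : f ∈ Abar W n) (hg : g ∈ Abar W n) :
    ReesLE f g ∨ ReesLE g f := by
  rw [abar_eq_biUnion, Set.mem_iUnion₂] at hf hg
  obtain ⟨i, -, hf⟩ := hf
  obtain ⟨j, -, hg⟩ := hg
  exact (le_total i j).imp (reesLE_of_mem_astep · hf hg) (reesLE_of_mem_astep · hg hf)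

theorem ele_eq_of_mem_astep {n : ℕ} {α : W} (hα : α ∈ Astep W (n + 1)) :
    Ele α = Abar W n ∪ {α} := by
  ext f
  constructor
  · rintro ⟨-, hfα⟩
    by_cases hf : f ∈ Abar W n
    · exact Or.inl hf
    · exact Or.inr (hfα.2.symm.trans (hα.2 f hf).1)
  · rintro (hf | rfl)
    · rw [abar_eq_biUnion, Set.mem_iUnion₂] at hf
      obtain ⟨i, hi, hf⟩ := hf
      exact ⟨mem_eset_of_mem_astep hf, reesLE_of_mem_astep hi.le hf hα⟩
    · exact mem_ele_self (mem_eset_of_mem_astep hα)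

theorem mem_afin_of_mem_astep {n : ℕ} {α : W} (hα : α ∈ Astep W (n + 1)) : α ∈ Afin W := by
  have hele := ele_eq_of_mem_astep hα
  have hsub : Ele α ⊆ Abar W (n + 1) := by
    rw [hele, abar_succ]
    exact Set.union_subset_union_right _ (Set.singleton_subset_iff.2 hα)
  refine ⟨⟨mem_eset_of_mem_astep hα, fun f hf g hg => ?_⟩, (abar_finite _).subset hsub,
    fun w hw => hα.2 w fun h => hw ?_⟩
  · exact reesLE_total_of_mem_abar (hsub hf) (hsub hg)
  · rw [hele]
    exact Or.inl h

theorem mem_astep_of_least {n : ℕ} {α m : W} (habs : ∀ w ∉ Ele α, w + α = α ∧ α + w = α)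
    (hm : m ∈ Ele α \ Abar W n) (hleast : ∀ w ∈ Ele α \ Abar W n, ReesLE m w) :
    m ∈ Astep W (n + 1) := by
  refine ⟨hm.2, fun w hw => ?_⟩
  by_cases hwα : w ∈ Ele α
  · exact hleast w ⟨hwα, hw⟩
  · exact hm.1.2.absorbs (habs w hwα)

theorem abar_subset_ele_of_notMem {α : W} (hα : α ∈ Afin W) :
    ∀ n, α ∉ Abar W n → Abar W n ⊆ Ele α ∧ (Abar W n).ncard = n
  | 0, _ => by simp [Abar]
  | n + 1, hn => by
    obtain ⟨hlin, hfin, habs⟩ := hα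
    have hn' : α ∉ Abar W n := fun h => hn (abar_mono n.le_succ h)
    obtain ⟨hsub, hcard⟩ := abar_subset_ele_of_notMem ⟨hlin, hfin, habs⟩ n hn'
    obtain ⟨m, hm, hleast⟩ := exists_least_of_subset_ele hlin hfin Set.sdiff_subset
      ⟨α, mem_ele_self hlin.1, hn'⟩
    have hstep : Astep W (n + 1) = {m} :=
      (astep_subsingleton _).eq_singleton_of_mem (mem_astep_of_least habs hm hleast)
    rw [abar_succ, hstep, Set.union_singleton]
    exact ⟨Set.insert_subset hm.1 hsub,
      by rw [Set.ncard_insert_of_notMem hm.2 (hfin.subset hsub), hcard]⟩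

theorem mem_abar_ncard_ele {α : W} (hα : α ∈ Afin W) : α ∈ Abar W (Ele α).ncard := by
  by_contra h
  obtain ⟨hsub, hcard⟩ := abar_subset_ele_of_notMem hα _ h
  rw [Set.eq_of_subset_of_ncard_le hsub hcard.ge hα.2.1] at h
  exact h (mem_ele_self hα.1.1)

end Stepwise

theorem As_eq_Afin {W : Type*} [AddSemigroup W] :
    As W = Afin W := by
  ext α
  constructor
  · rintro ⟨_ | n, hα⟩
    · exact hα.elim
    · exact mem_afin_of_mem_astep hα
  · exact fun hα => mem_as_of_mem_abar (mem_abar_ncard_ele hα)
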